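/- arXiv:2506.23853 — 3 statements merged into one kernel-verified Lean document; each statement's English description precedes it below -/
import Mathlib

section
/- Let D > 0 and for y ∈ ℝ² define v_y(s) = dist(s - y, D·ℤ²) where distance is measured in the 1-norm. If Y is uniformly distributed on [0, D]², then for every s ∈ [0, D]², the random variable v_Y(s) has density u ↦ (4/D²)·(u·1_{[0,D/2]}(u) + (D - u)·1_{[D/2,D]}(u)) with respect to Lebesgue measure. -/
open MeasureTheory ProbabilityTheory Filter Set

/-- 1-norm distance from `s - y` to the lattice `D·ℤ^d`. -/
noncomputable def vdist (D : ℝ) {d : ℕ} (y s : Fin d → ℝ) : ℝ :=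
  sInf (Set.range fun j : Fin d → ℤ => ∑ i, |s i - y i + (j i : ℝ) * D|)

/-- uniform probability measure on the cube `[0, D]^d`. -/
noncomputable def unifCube (D : ℝ) (d : ℕ) : Measure (Fin d → ℝ) :=
  (ENNReal.ofReal (D ^ d))⁻¹ • volume.restrict (Set.Icc 0 fun _ => D)

open scoped ENNReal

/-! Reducing modulo `D` coordinatewise, `v_y(s) = ‖s₀ - y₀‖ + ‖s₁ - y₁‖` with norms taken in
the circle `ℝ ⧸ Dℤ`. For `Y` uniform on the square, each `s_i - Y_i` is uniform on the circle,
whose norm is uniform on `[0, D/2]`; the two coordinates are independent, so the law of `v_Y(s)`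
is the convolution of two uniform laws on `[0, D/2]`, i.e. the triangular law on `[0, D]`. -/

lemma vdist_eq_sum_norm_coe {D : ℝ} {d : ℕ} (y s : Fin d → ℝ) :
    vdist D y s = ∑ i, ‖((s i - y i : ℝ) : AddCircle D)‖ := by
  refine IsLeast.csInf_eq ⟨⟨fun i => -round (D⁻¹ * (s i - y i)), ?_⟩, ?_⟩
  · refine Finset.sum_congr rfl fun i _ => ?_
    rw [AddCircle.norm_eq]
    push_cast
    ring_nf
  · rintro _ ⟨j, rfl⟩
    refine Finset.sum_le_sum fun i _ => ?_
    calc ‖((s i - y i : ℝ) : AddCircle D)‖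
        = ‖((s i - y i + (j i : ℝ) * D : ℝ) : AddCircle D)‖ := by
          rw [← zsmul_eq_mul, AddCircle.coe_add, AddCircle.coe_zsmul, AddCircle.coe_period,
            smul_zero, add_zero]
      _ ≤ |s i - y i + (j i : ℝ) * D| := QuotientAddGroup.norm_mk_le_norm

lemma map_norm_volume_addCircle (T : ℝ) [Fact (0 < T)] :
    (volume : Measure (AddCircle T)).map (‖·‖) =
      (2 : ℝ≥0∞) • volume.restrict (Icc 0 (T / 2)) := by
  refine Measure.ext_of_Iic _ _ fun ε => ?_
  have hball : (‖·‖) ⁻¹' Iic ε = Metric.closedBall (0 : AddCircle T) ε := by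
    ext; simp
  rw [Measure.map_apply measurable_norm measurableSet_Iic, hball, AddCircle.volume_closedBall,
    Measure.smul_apply, Measure.restrict_apply measurableSet_Iic]
  have hint : Iic ε ∩ Icc 0 (T / 2) = Icc 0 (min (T / 2) ε) := by
    ext; simp only [mem_inter_iff, mem_Iic, mem_Icc, le_min_iff]; tauto
  rw [hint, Real.volume_Icc]
  rcases le_total ε 0 with hε | hε
  · rw [ENNReal.ofReal_of_nonpos (by rw [min_le_iff]; right; linarith),
      ENNReal.ofReal_of_nonpos (by rw [sub_zero, min_le_iff]; right; linarith), smul_zero]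
  · rw [smul_eq_mul, ← ENNReal.ofReal_ofNat 2, ← ENNReal.ofReal_mul zero_le_two, mul_sub,
      mul_zero, sub_zero, mul_min_of_nonneg _ _ zero_le_two]
    ring_nf

lemma map_coe_sub_restrict_Icc (T : ℝ) [Fact (0 < T)] (s : ℝ) :
    (volume.restrict (Icc 0 T)).map (fun y : ℝ => ((s - y : ℝ) : AddCircle T)) = volume := by
  have hreflect : (fun y : ℝ => s - y) ⁻¹' Ico (s - T) s = Ioc 0 T := by
    ext y
    simp only [mem_preimage, mem_Ico, mem_Ioc]
    constructor <;> intro h <;> constructor <;> linarith [h.1, h.2]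
  have hmp := (Measure.measurePreserving_sub_left volume s).restrict_preimage
    (measurableSet_Ico (a := s - T) (b := s))
  rw [hreflect] at hmp
  have hmk := AddCircle.measurePreserving_mk T (s - T)
  rw [sub_add_cancel] at hmk
  rw [Measure.restrict_congr_set Ioc_ae_eq_Icc.symm, ← hmk.map_eq,
    ← Measure.restrict_congr_set (Ico_ae_eq_Ioc (a := s - T) (b := s)), ← hmp.map_eq,
    Measure.map_map (by fun_prop) (by fun_prop)]
  rfl

lemma map_add_pi_finTwo {α M : Type*} [MeasurableSpace α] [AddMonoid M] [MeasurableSpace M]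
    [MeasurableAdd₂ M] (μ : Measure α) [SigmaFinite μ] {f g : α → M}
    (hf : Measurable f) (hg : Measurable g) :
    (Measure.pi fun _ : Fin 2 => μ).map (fun y => f (y 0) + g (y 1)) = μ.map f ∗ μ.map g := by
  rw [← ((measurePreserving_finTwoArrow μ).symm _).map_eq,
    Measure.map_map (by fun_prop) (by fun_prop), Measure.conv, Measure.map_prod_map _ _ hf hg,
    Measure.map_map (by fun_prop) (by fun_prop)]
  rfl

lemma indicator_one_lconvolution_indicator_one {G : Type*} [Add G] [Neg G] [MeasurableSpace G]
    [MeasurableAdd G] [MeasurableNeg G] (μ : Measure G) {S T : Set G}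
    (hS : MeasurableSet S) (hT : MeasurableSet T) (x : G) :
    (S.indicator 1 ⋆ₗ[μ] T.indicator 1) x = μ (S ∩ (fun y => -y + x) ⁻¹' T) := by
  rw [lconvolution_def, ← lintegral_indicator_one (hS.inter (hT.preimage (by fun_prop)))]
  refine lintegral_congr fun y => ?_
  simp only [indicator, mem_inter_iff, mem_preimage, Pi.one_apply]
  split_ifs <;> simp_all

lemma conv_restrict_eq_withDensity {G : Type*} [AddGroup G] [MeasurableSpace G]
    [MeasurableAdd₂ G] [MeasurableNeg G] (μ : Measure G) [SFinite μ] [μ.IsAddLeftInvariant]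
    {S T : Set G} (hS : MeasurableSet S) (hT : MeasurableSet T) :
    μ.restrict S ∗ μ.restrict T = μ.withDensity fun x => μ (S ∩ (fun y => -y + x) ⁻¹' T) := by
  rw [← withDensity_indicator_one hS, ← withDensity_indicator_one hT,
    conv_withDensity_eq_lconvolution (by fun_prop) (by fun_prop)]
  exact congrArg _ (funext (indicator_one_lconvolution_indicator_one μ hS hT))

lemma volume_Icc_inter_preimage_neg_add_Icc {D x : ℝ} (hx : x ≠ D / 2) :
    volume (Icc 0 (D / 2) ∩ (fun y => -y + x) ⁻¹' Icc 0 (D / 2)) =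
      ENNReal.ofReal (indicator (Icc 0 (D / 2)) (fun v => v) x +
        indicator (Icc (D / 2) D) (fun v => D - v) x) := by
  have hpre : (fun y => -y + x) ⁻¹' Icc 0 (D / 2) = Icc (x - D / 2) x := by
    ext y
    simp only [mem_preimage, mem_Icc]
    constructor <;> intro h <;> constructor <;> linarith [h.1, h.2]
  rw [hpre, Icc_inter_Icc, Real.volume_Icc]
  by_cases h1 : x ∈ Icc 0 (D / 2) <;> by_cases h2 : x ∈ Icc (D / 2) D <;>
    simp only [indicator_of_mem, indicator_of_notMem, h1, h2, not_false_eq_true] <;>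
    simp only [mem_Icc, not_and_or, not_le] at h1 h2
  · exact absurd (le_antisymm h1.2 h2.1) hx
  · congr 1; grind
  · congr 1; grind
  · rw [add_zero, ENNReal.ofReal_zero, ENNReal.ofReal_eq_zero]; grind

theorem stmt1_general {Ω : Type*} [MeasureSpace Ω]
    (D : ℝ) (hD : 0 < D) (Y : Ω → Fin 2 → ℝ) (hYmeas : Measurable Y)
    (hYlaw : Measure.map Y ℙ = unifCube D 2) :
    ∀ s ∈ Set.Icc (0 : Fin 2 → ℝ) fun _ => D,
      Measure.map (fun ω => vdist D (Y ω) s) ℙ =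
        volume.withDensity fun u => ENNReal.ofReal
          ((4 / D ^ 2) *
            (Set.indicator (Set.Icc 0 (D / 2)) (fun v => v) u +
              Set.indicator (Set.Icc (D / 2) D) (fun v => D - v) u)) := by
  intro s _
  have : Fact (0 < D) := ⟨hD⟩
  set φ : Fin 2 → ℝ → ℝ := fun i t => ‖((s i - t : ℝ) : AddCircle D)‖
  have hφ (i : Fin 2) : Measurable (φ i) := by fun_prop
  have hlaw (i : Fin 2) : (volume.restrict (Icc 0 D)).map (φ i) =
      (2 : ℝ≥0∞) • volume.restrict (Icc 0 (D / 2)) := by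
    rw [← map_norm_volume_addCircle, ← map_coe_sub_restrict_Icc D (s i),
      Measure.map_map (by fun_prop) (by fun_prop)]
    rfl
  have hcube : volume.restrict (Icc (0 : Fin 2 → ℝ) fun _ => D) =
      Measure.pi fun _ => volume.restrict (Icc 0 D) := by
    rw [← pi_univ_Icc, volume_pi, Measure.restrict_pi_pi]
    rfl
  calc Measure.map (fun ω => vdist D (Y ω) s) ℙ
      = (unifCube D 2).map fun y => φ 0 (y 0) + φ 1 (y 1) := by
        rw [← hYlaw, Measure.map_map (by fun_prop) hYmeas]
        simp only [Function.comp_def, vdist_eq_sum_norm_coe, Fin.sum_univ_two]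
        rfl
    _ = ((ENNReal.ofReal (D ^ 2))⁻¹ * 4) •
          volume.withDensity fun x =>
            volume (Icc 0 (D / 2) ∩ (fun y => -y + x) ⁻¹' Icc 0 (D / 2)) := by
        rw [unifCube, Measure.map_smul, hcube, map_add_pi_finTwo _ (hφ 0) (hφ 1),
          hlaw, hlaw, Measure.conv_smul_left, Measure.conv_smul_right,
          conv_restrict_eq_withDensity _ measurableSet_Icc measurableSet_Icc, smul_smul, smul_smul,
          mul_assoc]
        norm_num
    _ = _ := by
        rw [← withDensity_smul' _ _
          (ENNReal.mul_ne_top (ENNReal.inv_ne_top.2 (by positivity)) (by norm_num))]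
        -- at `u = D / 2` both indicators fire, so the densities agree only almost everywhere
        refine withDensity_congr_ae ?_
        filter_upwards [(countable_singleton (D / 2)).ae_notMem volume] with x hx
        rw [Pi.smul_apply, volume_Icc_inter_preimage_neg_add_Icc hx, smul_eq_mul,
          ENNReal.ofReal_mul (by positivity), ENNReal.ofReal_div_of_pos (by positivity),
          ENNReal.div_eq_inv_mul]
        norm_num

theorem stmt1 {Ω : Type*} [MeasureSpace Ω] [IsProbabilityMeasure (ℙ : Measure Ω)]
    (D : ℝ) (hD : 0 < D) (Y : Ω → Fin 2 → ℝ) (hYmeas : Measurable Y)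
    (hYlaw : Measure.map Y ℙ = unifCube D 2) :
    ∀ s ∈ Set.Icc (0 : Fin 2 → ℝ) fun _ => D,
      Measure.map (fun ω => vdist D (Y ω) s) ℙ =
        volume.withDensity fun u => ENNReal.ofReal
          ((4 / D ^ 2) *
            (Set.indicator (Set.Icc 0 (D / 2)) (fun v => v) u +
              Set.indicator (Set.Icc (D / 2) D) (fun v => D - v) u)) :=
  stmt1_general D hD Y hYmeas hYlaw
end

section
/- Let n ≥ 1 and let ψ : [0, ∞) → [0, ∞) satisfy: ψ(0) = 1, ψ(x) = 0 for x ≥ 1, ψ^{(n-1)} exists and is Lipschitz on [0, 1], ψ is n times differentiable at 0 with ψ^{(n)}(0) ≠ 0 and ψ^{(k)}(0) = 0 for 1 ≤ k ≤ n - 1. Then there exists a constant C ∈ (0, ∞) such that for all x, y ≥ 0, |ψ(x) - ψ(y)| ≤ C·(max(x, y))^{n-1}·|x - y|. -/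
open Filter Set

/-!
Write `s = [0, 1]` and `D^j ψ` for the `j`-th derivative of `ψ` within `s`. Descending from the
Lipschitz bound `|D^(n-1) ψ y - D^(n-1) ψ x| ≤ K |y - x|`, the mean value inequality turns a bound
`|D^(j+1) ψ z| ≤ K z^m` on `[0, y]` into `|D^j ψ y - D^j ψ x| ≤ K y^m (y - x)`, and since `D^j ψ`
vanishes at `0` for `1 ≤ j ≤ n - 1` this feeds the next bound `|D^j ψ z| ≤ K z^(m+1)`. At `j = 0`
this is the claim on `[0, 1]`; beyond `1` the function vanishes, so crossing `1` costs nothing.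
-/

theorem norm_sub_le_mul_pow_mul_of_norm_derivWithin_le {E : Type*} [NormedAddCommGroup E]
    [NormedSpace ℝ E] {f : ℝ → E} {K b : ℝ} {m : ℕ} (hK : 0 ≤ K)
    (hf : DifferentiableOn ℝ f (Icc 0 b))
    (hf' : ∀ z ∈ Icc 0 b, ‖derivWithin f (Icc 0 b) z‖ ≤ K * z ^ m)
    {x y : ℝ} (hx : 0 ≤ x) (hxy : x ≤ y) (hy : y ≤ b) :
    ‖f y - f x‖ ≤ K * y ^ m * (y - x) := by
  have hsub : Icc 0 y ⊆ Icc 0 b := Icc_subset_Icc_right hy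
  have hderiv : ∀ z ∈ Icc 0 y, HasDerivWithinAt f (derivWithin f (Icc 0 b) z) (Icc 0 y) z :=
    fun z hz ↦ ((hf z (hsub hz)).hasDerivWithinAt).mono hsub
  have hbound : ∀ z ∈ Icc 0 y, ‖derivWithin f (Icc 0 b) z‖ ≤ K * y ^ m := fun z hz ↦
    (hf' z (hsub hz)).trans (by gcongr; exacts [hz.1, hz.2])
  simpa [abs_of_nonneg (sub_nonneg.2 hxy)] using
    (convex_Icc 0 y).norm_image_sub_le_of_norm_hasDerivWithin_le hderiv hbound
      ⟨hx, hxy⟩ ⟨hx.trans hxy, le_rfl⟩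

theorem abs_iteratedDerivWithin_sub_le_of_lipschitzOnWith {f : ℝ → ℝ} {k : ℕ} {K : NNReal}
    (hf : ContDiffOn ℝ k f (Icc 0 1))
    (hK : LipschitzOnWith K (iteratedDerivWithin k f (Icc 0 1)) (Icc 0 1))
    (hzero : ∀ j : ℕ, 1 ≤ j → j ≤ k → iteratedDerivWithin j f (Icc 0 1) 0 = 0)
    {m : ℕ} (hm : m ≤ k) {x y : ℝ} (hx : 0 ≤ x) (hxy : x ≤ y) (hy : y ≤ 1) :
    |iteratedDerivWithin (k - m) f (Icc 0 1) y - iteratedDerivWithin (k - m) f (Icc 0 1) x|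
      ≤ K * y ^ m * (y - x) := by
  induction m generalizing x y with
  | zero =>
    simpa [Real.dist_eq, abs_of_nonneg (sub_nonneg.2 hxy)] using
      hK.dist_le_mul y ⟨hx.trans hxy, hy⟩ x ⟨hx, hxy.trans hy⟩
  | succ m ih =>
    have hsucc : k - (m + 1) + 1 = k - m := by omega
    have hdiff : DifferentiableOn ℝ (iteratedDerivWithin (k - (m + 1)) f (Icc 0 1)) (Icc 0 1) :=
      hf.differentiableOn_iteratedDerivWithin (by exact_mod_cast (by omega : k - (m + 1) < k))
        (uniqueDiffOn_Icc one_pos)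
    have hderiv : ∀ z ∈ Icc (0 : ℝ) 1,
        |derivWithin (iteratedDerivWithin (k - (m + 1)) f (Icc 0 1)) (Icc 0 1) z|
          ≤ K * z ^ (m + 1) := by
      intro z hz
      rw [← iteratedDerivWithin_succ, hsucc]
      have := ih (by omega) le_rfl hz.1 hz.2
      rwa [hzero (k - m) (by omega) (Nat.sub_le k m), sub_zero, sub_zero, mul_assoc, ← pow_succ] at this
    exact norm_sub_le_mul_pow_mul_of_norm_derivWithin_le K.coe_nonneg hdiff hderiv hx hxy hy

theorem abs_sub_le_mul_max_pow_mul_abs_sub {f : ℝ → ℝ} {K : ℝ} {k : ℕ} (hK : 0 ≤ K)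
    (hf : ∀ x y : ℝ, 0 ≤ x → x ≤ y → y ≤ 1 → |f y - f x| ≤ K * y ^ k * (y - x))
    (hvanish : ∀ x : ℝ, 1 ≤ x → f x = 0) {x y : ℝ} (hx : 0 ≤ x) (hy : 0 ≤ y) :
    |f x - f y| ≤ K * max x y ^ k * |x - y| := by
  wlog hxy : x ≤ y generalizing x y
  · simpa [abs_sub_comm, max_comm] using this hy hx (le_of_not_ge hxy)
  rw [max_eq_right hxy, abs_sub_comm x y, abs_of_nonneg (sub_nonneg.2 hxy), abs_sub_comm]
  rcases le_or_gt y 1 with hy1 | hy1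
  · exact hf x y hx hxy hy1
  rcases le_or_gt 1 x with hx1 | hx1
  · simp only [hvanish x hx1, hvanish y hy1.le, sub_self, abs_zero]
    exact mul_nonneg (by positivity) (sub_nonneg.2 hxy)
  calc |f y - f x| = |f 1 - f x| := by rw [hvanish y hy1.le, hvanish 1 le_rfl]
    _ ≤ K * 1 ^ k * (1 - x) := hf x 1 hx hx1.le le_rfl
    _ ≤ K * y ^ k * (y - x) := by gcongr

theorem stmt2_general (n : ℕ) (ψ : ℝ → ℝ)
    (hψ1 : ∀ x : ℝ, 1 ≤ x → ψ x = 0)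
    (hsmooth : ContDiffOn ℝ (n - 1) ψ (Set.Icc 0 1))
    (hLip : ∃ K : NNReal,
      LipschitzOnWith K (iteratedDerivWithin (n - 1) ψ (Set.Icc 0 1)) (Set.Icc 0 1))
    (hzero : ∀ k : ℕ, 1 ≤ k → k ≤ n - 1 → iteratedDerivWithin k ψ (Set.Icc 0 1) 0 = 0) :
    ∃ C : ℝ, 0 < C ∧ ∀ x y : ℝ, 0 ≤ x → 0 ≤ y →
      |ψ x - ψ y| ≤ C * max x y ^ (n - 1) * |x - y| := by
  obtain ⟨K, hK⟩ := hLip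
  have hsmooth' : ContDiffOn ℝ (n - 1 : ℕ) ψ (Icc 0 1) := by exact_mod_cast hsmooth
  have hunit : ∀ x y : ℝ, 0 ≤ x → x ≤ y → y ≤ 1 → |ψ y - ψ x| ≤ K * y ^ (n - 1) * (y - x) :=
    fun x y hx hxy hy ↦ by
      simpa using abs_iteratedDerivWithin_sub_le_of_lipschitzOnWith hsmooth' hK hzero le_rfl hx hxy hy
  refine ⟨K + 1, by positivity, fun x y hx hy ↦ ?_⟩
  calc |ψ x - ψ y| ≤ K * max x y ^ (n - 1) * |x - y| :=
        abs_sub_le_mul_max_pow_mul_abs_sub K.coe_nonneg hunit hψ1 hx hy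
    _ ≤ (K + 1) * max x y ^ (n - 1) * |x - y| := by gcongr; linarith

theorem stmt2 (n : ℕ) (hn : 1 ≤ n) (ψ : ℝ → ℝ)
    (hψ0 : ψ 0 = 1) (hψ1 : ∀ x : ℝ, 1 ≤ x → ψ x = 0)
    (hψnonneg : ∀ x : ℝ, 0 ≤ x → 0 ≤ ψ x)
    (hsmooth : ContDiffOn ℝ (n - 1) ψ (Set.Icc 0 1))
    (hLip : ∃ K : NNReal,
      LipschitzOnWith K (iteratedDerivWithin (n - 1) ψ (Set.Icc 0 1)) (Set.Icc 0 1))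
    (hdiff : DifferentiableWithinAt ℝ
      (iteratedDerivWithin (n - 1) ψ (Set.Icc 0 1)) (Set.Icc 0 1) 0)
    (hn0 : iteratedDerivWithin n ψ (Set.Icc 0 1) 0 ≠ 0)
    (hzero : ∀ k : ℕ, 1 ≤ k → k ≤ n - 1 → iteratedDerivWithin k ψ (Set.Icc 0 1) 0 = 0) :
    ∃ C : ℝ, 0 < C ∧ ∀ x y : ℝ, 0 ≤ x → 0 ≤ y →
      |ψ x - ψ y| ≤ C * max x y ^ (n - 1) * |x - y| :=
  stmt2_general n ψ hψ1 hsmooth hLip hzero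
end

section
/- With the notation of the rand model: Z₁ Pareto(β-1) on [1,∞), Y₁ uniform on [0,D]^d independent of Z₁, ψ ∈ ℋⁿ, and X₁(s) = Z₁^{α-d}·ψ(v_{Y₁}(s)/Z₁). If κ := (α - n - d)/(β - 1) < 1/2, then for all s, x ∈ [0, D]^d, E[(X₁(s) - X₁(x))²] ≤ C·|s - x|₁² for some constant C depending only on ψ, β, α, n, d, D. -/
/-!
The derivatives of `ψ` of orders `1, …, n - 1` vanish at `0` and the `(n - 1)`-th one is
Lipschitz, so iterating the mean value inequality gives
`|ψ u - ψ v| ≤ K · max u v ^ (n - 1) · |u - v|`. Since `v_y(s) ≤ d D / 2` whatever `y` is, and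
`v_y` is 1-Lipschitz for the 1-norm, this yields
`|X₁(s) - X₁(x)| ≤ K (d D / 2) ^ (n - 1) · Z₁ ^ (α - n - d) · |s - x|₁`, and `κ < 1/2` says exactly
that `Z₁ ^ (2 (α - n - d))` is integrable under the Pareto law of rate `β - 1`.
-/

open MeasureTheory ProbabilityTheory Filter Set

section vdist

variable (D : ℝ) {d : ℕ} (y : Fin d → ℝ)

lemma vdist_bddBelow (s : Fin d → ℝ) :
    BddBelow (Set.range fun j : Fin d → ℤ => ∑ i, |s i - y i + (j i : ℝ) * D|) :=
  ⟨0, by rintro _ ⟨j, rfl⟩; positivity⟩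

lemma vdist_nonneg (s : Fin d → ℝ) : 0 ≤ vdist D y s :=
  le_csInf (range_nonempty _) (by rintro _ ⟨j, rfl⟩; positivity)

lemma vdist_le_vdist_add (s x : Fin d → ℝ) :
    vdist D y s ≤ vdist D y x + ∑ i, |s i - x i| := by
  rw [← sub_le_iff_le_add]
  refine le_csInf (range_nonempty _) ?_
  rintro _ ⟨j, rfl⟩
  rw [sub_le_iff_le_add, ← Finset.sum_add_distrib]
  calc vdist D y s ≤ ∑ i, |s i - y i + (j i : ℝ) * D| := csInf_le (vdist_bddBelow D y s) ⟨j, rfl⟩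
    _ ≤ _ := Finset.sum_le_sum fun i _ => by
      calc |s i - y i + (j i : ℝ) * D| = |(x i - y i + j i * D) + (s i - x i)| := by ring_nf
        _ ≤ _ := abs_add_le _ _

lemma abs_vdist_sub_vdist_le (s x : Fin d → ℝ) :
    |vdist D y s - vdist D y x| ≤ ∑ i, |s i - x i| := by
  have hxs := vdist_le_vdist_add D y x s
  simp only [abs_sub_comm (x _)] at hxs
  rw [abs_sub_le_iff]
  constructor <;> linarith [vdist_le_vdist_add D y s x]

lemma vdist_le (hD : D ≠ 0) (s : Fin d → ℝ) : vdist D y s ≤ d * |D| / 2 := by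
  -- shift each coordinate of `s - y` to the nearest multiple of `D`
  set j : Fin d → ℤ := fun i => -round ((s i - y i) / D)
  calc vdist D y s ≤ ∑ i, |s i - y i + (j i : ℝ) * D| := csInf_le (vdist_bddBelow D y s) ⟨j, rfl⟩
    _ ≤ ∑ _i : Fin d, |D| / 2 := Finset.sum_le_sum fun i _ => by
      have h := abs_sub_round ((s i - y i) / D)
      rw [show s i - y i + (j i : ℝ) * D = D * ((s i - y i) / D - round ((s i - y i) / D)) by
        simp only [j, Int.cast_neg]; field_simp; ring, abs_mul]
      nlinarith [abs_nonneg D]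
    _ = d * |D| / 2 := by
      simp only [Finset.sum_const, Finset.card_univ, Fintype.card_fin, nsmul_eq_mul]; ring

end vdist

lemma ae_le_paretoMeasure (t r : ℝ) : ∀ᵐ x ∂paretoMeasure t r, t ≤ x := by
  rw [ae_iff, show {x | ¬t ≤ x} = Iio t by ext; simp, paretoMeasure,
    withDensity_apply _ measurableSet_Iio]
  exact lintegral_paretoPDF_of_le le_rfl

lemma integrable_rpow_paretoMeasure {t r p : ℝ} (ht : 0 < t) (hr : 0 ≤ r) (hp : p < r) :
    Integrable (fun x => x ^ p) (paretoMeasure t r) := by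
  rw [paretoMeasure, integrable_withDensity_iff (f := paretoPDF t r)
    (measurable_paretoPDFReal t r).ennreal_ofReal
    (.of_forall fun _ => ENNReal.ofReal_lt_top)]
  have hdens : (fun x : ℝ => x ^ p * (paretoPDF t r x).toReal) =
      (Ici t).indicator fun x => r * t ^ r * x ^ (p - r - 1) := by
    ext x
    rcases lt_or_ge x t with hxt | hxt
    · simp [paretoPDF_of_lt hxt, hxt]
    · have hx : 0 < x := ht.trans_le hxt
      rw [indicator_of_mem (mem_Ici.mpr hxt), paretoPDF_of_le hxt,
        ENNReal.toReal_ofReal (by positivity), show p - r - 1 = p + -(r + 1) by ring, Real.rpow_add hx]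
      ring
  rw [hdens, integrable_indicator_iff measurableSet_Ici, integrableOn_Ici_iff_integrableOn_Ioi]
  exact ((integrableOn_Ioi_rpow_iff ht).mpr (by linarith)).const_mul _

lemma hasDerivWithinAt_iteratedDerivWithin {f : ℝ → ℝ} {s : Set ℝ} {m k : ℕ}
    (hf : ContDiffOn ℝ m f s) (hs : UniqueDiffOn ℝ s) (hk : k < m) {x : ℝ} (hx : x ∈ s) :
    HasDerivWithinAt (iteratedDerivWithin k f s) (iteratedDerivWithin (k + 1) f s x) s x := by
  rw [iteratedDerivWithin_succ]
  exact (hf.differentiableOn_iteratedDerivWithin (by exact_mod_cast hk) hs x hx).hasDerivWithinAt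

section Flatness

variable {ψ : ℝ → ℝ} {K : NNReal} {m : ℕ}

lemma abs_iteratedDerivWithin_sub_le (hψ : ContDiffOn ℝ m ψ (Icc 0 1))
    (hLip : LipschitzOnWith K (iteratedDerivWithin m ψ (Icc 0 1)) (Icc 0 1))
    (hzero : ∀ k : ℕ, 1 ≤ k → k ≤ m → iteratedDerivWithin k ψ (Icc 0 1) 0 = 0)
    {k : ℕ} (hk : k ≤ m) {a b : ℝ}
    (ha : 0 ≤ a) (hab : a ≤ b) (hb : b ≤ 1) :
    |iteratedDerivWithin k ψ (Icc 0 1) b - iteratedDerivWithin k ψ (Icc 0 1) a| ≤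
      K * b ^ (m - k) * (b - a) := by
  induction hk using Nat.decreasingInduction generalizing a b with
  | self =>
    simpa [Real.dist_eq, abs_of_nonneg (sub_nonneg.2 hab)] using
      hLip.dist_le_mul b ⟨ha.trans hab, hb⟩ a ⟨ha, hab.trans hb⟩
  | of_succ k hk ih =>
    have hbound : ∀ u ∈ Icc a b, ‖iteratedDerivWithin (k + 1) ψ (Icc 0 1) u‖ ≤ K * b ^ (m - k) := by
      intro u hu
      have hu0 : 0 ≤ u := ha.trans hu.1
      have h := ih le_rfl hu0 (hu.2.trans hb)
      rw [hzero (k + 1) (by omega) hk, sub_zero, sub_zero] at h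
      calc ‖iteratedDerivWithin (k + 1) ψ (Icc 0 1) u‖ ≤ K * u ^ (m - (k + 1)) * u := h
        _ = K * u ^ (m - k) := by rw [mul_assoc, ← pow_succ, show m - (k + 1) + 1 = m - k by omega]
        _ ≤ K * b ^ (m - k) := by gcongr; exact hu.2
    have hderiv : ∀ u ∈ Icc a b, HasDerivWithinAt (iteratedDerivWithin k ψ (Icc 0 1))
        (iteratedDerivWithin (k + 1) ψ (Icc 0 1) u) (Icc a b) u := fun u hu =>
      (hasDerivWithinAt_iteratedDerivWithin hψ (uniqueDiffOn_Icc one_pos) hk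
        ⟨ha.trans hu.1, hu.2.trans hb⟩).mono (Icc_subset_Icc ha hb)
    simpa [abs_of_nonneg (sub_nonneg.2 hab)] using
      (convex_Icc a b).norm_image_sub_le_of_norm_hasDerivWithin_le hderiv hbound
        (left_mem_Icc.2 hab) (right_mem_Icc.2 hab)

lemma abs_sub_le_mul_max_pow (hψ : ContDiffOn ℝ m ψ (Icc 0 1))
    (hLip : LipschitzOnWith K (iteratedDerivWithin m ψ (Icc 0 1)) (Icc 0 1))
    (hzero : ∀ k : ℕ, 1 ≤ k → k ≤ m → iteratedDerivWithin k ψ (Icc 0 1) 0 = 0)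
    (hψ1 : ∀ x : ℝ, 1 ≤ x → ψ x = 0) (u v : ℝ) (hu : 0 ≤ u) (hv : 0 ≤ v) :
    |ψ u - ψ v| ≤ K * max u v ^ m * |u - v| := by
  wlog hvu : v ≤ u generalizing u v
  · rw [abs_sub_comm, max_comm, abs_sub_comm u]
    exact this v u hv hu (le_of_not_ge hvu)
  have htrunc : ∀ x, ψ x = ψ (min x 1) := fun x => by
    rcases le_total x 1 with hx | hx
    · rw [min_eq_left hx]
    · rw [min_eq_right hx, hψ1 x hx, hψ1 1 le_rfl]
  have h := abs_iteratedDerivWithin_sub_le hψ hLip hzero (Nat.zero_le m) (le_min hv zero_le_one)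
    (min_le_min_right 1 hvu) (min_le_right u 1)
  rw [iteratedDerivWithin_zero, Nat.sub_zero] at h
  rw [htrunc u, htrunc v, max_eq_left hvu, abs_of_nonneg (sub_nonneg.2 hvu)]
  have hmin : min u 1 - min v 1 ≤ u - v := by
    rcases le_total u 1 with hu1 | hu1 <;> rcases le_total v 1 with hv1 | hv1 <;>
      simp only [min_eq_left, min_eq_right, hu1, hv1] <;> linarith
  refine h.trans ?_
  gcongr K * ?_ ^ m * ?_
  · exact sub_nonneg.2 (min_le_min_right 1 hvu)
  · exact min_le_left u 1

end Flatness

lemma abs_rpow_mul_sub_le {ψ : ℝ → ℝ} {K M e z u v : ℝ} {m : ℕ}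
    (hψ : ∀ u v : ℝ, 0 ≤ u → 0 ≤ v → |ψ u - ψ v| ≤ K * max u v ^ m * |u - v|) (hK : 0 ≤ K)
    (hz : 0 < z) (hu : 0 ≤ u) (hv : 0 ≤ v) (huM : u ≤ M) (hvM : v ≤ M) :
    |z ^ e * ψ (u / z) - z ^ e * ψ (v / z)| ≤ K * M ^ m * z ^ (e - m - 1) * |u - v| := by
  have h := hψ (u / z) (v / z) (by positivity) (by positivity)
  rw [max_div_div_right hz.le, ← sub_div, abs_div, abs_of_pos hz, div_pow] at h
  rw [← mul_sub, abs_mul, abs_of_pos (Real.rpow_pos_of_pos hz e)]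
  calc z ^ e * |ψ (u / z) - ψ (v / z)| ≤ z ^ e * (K * (max u v ^ m / z ^ m) * (|u - v| / z)) := by
        gcongr
    _ ≤ z ^ e * (K * (M ^ m / z ^ m) * (|u - v| / z)) := by
        gcongr
        exact max_le huM hvM
    _ = K * M ^ m * z ^ (e - m - 1) * |u - v| := by
        rw [Real.rpow_sub hz, Real.rpow_sub hz, Real.rpow_natCast, Real.rpow_one]
        field_simp

lemma sq_rpow_mul_vdist_sub_le {ψ : ℝ → ℝ} {K D e z : ℝ} {m d : ℕ}
    (hψ : ∀ u v : ℝ, 0 ≤ u → 0 ≤ v → |ψ u - ψ v| ≤ K * max u v ^ m * |u - v|) (hK : 0 ≤ K)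
    (hD : D ≠ 0) (hz : 0 < z) (y s x : Fin d → ℝ) :
    (z ^ e * ψ (vdist D y s / z) - z ^ e * ψ (vdist D y x / z)) ^ 2 ≤
      (K * (d * |D| / 2) ^ m) ^ 2 * z ^ (2 * (e - m - 1)) * (∑ i, |s i - x i|) ^ 2 := by
  have h := abs_rpow_mul_sub_le (e := e) hψ hK hz (vdist_nonneg D y s) (vdist_nonneg D y x)
    (vdist_le D y hD s) (vdist_le D y hD x)
  calc _ = |z ^ e * ψ (vdist D y s / z) - z ^ e * ψ (vdist D y x / z)| ^ 2 := (sq_abs _).symm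
    _ ≤ (K * (d * |D| / 2) ^ m * z ^ (e - m - 1) * ∑ i, |s i - x i|) ^ 2 := by
      gcongr
      exact h.trans (by gcongr; exact abs_vdist_sub_vdist_le D y s x)
    _ = _ := by
      rw [two_mul, Real.rpow_add hz]
      ring

theorem stmt14_general {Ω : Type*} [MeasureSpace Ω] [IsProbabilityMeasure (ℙ : Measure Ω)]
    (D : ℝ) (hD : 0 < D) (d : ℕ)
    (α β : ℝ) (hβ : 1 < β) (n : ℕ) (hn : 1 ≤ n)
    (hκ : (α - n - d) / (β - 1) < 1 / 2)
    -- ψ ∈ ℋⁿ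
    (ψ : ℝ → ℝ) (hψ1 : ∀ x : ℝ, 1 ≤ x → ψ x = 0)
    (hsmooth : ContDiffOn ℝ (n - 1) ψ (Set.Icc 0 1))
    (hLip : ∃ K : NNReal,
      LipschitzOnWith K (iteratedDerivWithin (n - 1) ψ (Set.Icc 0 1)) (Set.Icc 0 1))
    (hzero : ∀ k : ℕ, 1 ≤ k → k ≤ n - 1 → iteratedDerivWithin k ψ (Set.Icc 0 1) 0 = 0)
    (Z : Ω → ℝ) (Y : Ω → Fin d → ℝ) (hZmeas : Measurable Z)
    (hZlaw : Measure.map Z ℙ = paretoMeasure 1 (β - 1)) :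
    ∃ C : ℝ, 0 < C ∧
      ∀ s ∈ Set.Icc (0 : Fin d → ℝ) fun _ => D,
        ∀ x ∈ Set.Icc (0 : Fin d → ℝ) fun _ => D,
          ∫ ω, ((Z ω) ^ (α - d) * ψ (vdist D (Y ω) s / Z ω) -
              (Z ω) ^ (α - d) * ψ (vdist D (Y ω) x / Z ω)) ^ 2 ∂ℙ ≤
            C * (∑ i, |s i - x i|) ^ 2 := by
  obtain ⟨K, hK⟩ := hLip
  have hsmooth' : ContDiffOn ℝ (n - 1 : ℕ) ψ (Icc 0 1) := by exact_mod_cast hsmooth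
  have hψ := abs_sub_le_mul_max_pow hsmooth' hK hzero hψ1
  set γ := 2 * (α - n - d)
  have hZ1 : ∀ᵐ ω ∂ℙ, 1 ≤ Z ω :=
    ae_of_ae_map hZmeas.aemeasurable (hZlaw ▸ ae_le_paretoMeasure 1 (β - 1))
  have hγ : γ < β - 1 := by
    rw [div_lt_iff₀ (by linarith)] at hκ
    linarith
  have hint : Integrable (fun ω => Z ω ^ γ) ℙ :=
    (hZlaw ▸ integrable_rpow_paretoMeasure one_pos (by linarith) hγ).comp_measurable hZmeas
  have hmoment : 0 ≤ ∫ ω, Z ω ^ γ ∂ℙ :=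
    integral_nonneg_of_ae (hZ1.mono fun ω hz => Real.rpow_nonneg (zero_le_one.trans hz) γ)
  set c := ((K : ℝ) * (d * |D| / 2) ^ (n - 1)) ^ 2
  refine ⟨c * ∫ ω, Z ω ^ γ ∂ℙ + 1, by positivity, fun s _ x _ => ?_⟩
  have hpoint : ∀ᵐ ω ∂ℙ, ((Z ω) ^ (α - d) * ψ (vdist D (Y ω) s / Z ω) -
      (Z ω) ^ (α - d) * ψ (vdist D (Y ω) x / Z ω)) ^ 2 ≤ c * Z ω ^ γ * (∑ i, |s i - x i|) ^ 2 := by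
    filter_upwards [hZ1] with ω hz
    convert sq_rpow_mul_vdist_sub_le hψ K.coe_nonneg hD.ne' (one_pos.trans_le hz) (Y ω) s x
      using 4
    push_cast [Nat.cast_sub hn]
    ring
  calc _ ≤ ∫ ω, c * Z ω ^ γ * (∑ i, |s i - x i|) ^ 2 ∂ℙ :=
        integral_mono_of_nonneg (.of_forall fun _ => sq_nonneg _)
          ((hint.const_mul c).mul_const _) hpoint
    _ = c * (∫ ω, Z ω ^ γ ∂ℙ) * (∑ i, |s i - x i|) ^ 2 := by
      rw [integral_mul_const, integral_const_mul]
    _ ≤ _ := by nlinarith [sq_nonneg (∑ i, |s i - x i|)]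

theorem stmt14 {Ω : Type*} [MeasureSpace Ω] [IsProbabilityMeasure (ℙ : Measure Ω)]
    (D : ℝ) (hD : 0 < D) (d : ℕ) (hd : 1 ≤ d)
    (α β : ℝ) (hβ : 1 < β) (n : ℕ) (hn : 1 ≤ n)
    (hκ : (α - n - d) / (β - 1) < 1 / 2)
    -- ψ ∈ ℋⁿ
    (ψ : ℝ → ℝ) (hψ0 : ψ 0 = 1) (hψ1 : ∀ x : ℝ, 1 ≤ x → ψ x = 0)
    (hψnonneg : ∀ x : ℝ, 0 ≤ x → 0 ≤ ψ x)
    (hsmooth : ContDiffOn ℝ (n - 1) ψ (Set.Icc 0 1))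
    (hLip : ∃ K : NNReal,
      LipschitzOnWith K (iteratedDerivWithin (n - 1) ψ (Set.Icc 0 1)) (Set.Icc 0 1))
    (hdiff : DifferentiableWithinAt ℝ
      (iteratedDerivWithin (n - 1) ψ (Set.Icc 0 1)) (Set.Icc 0 1) 0)
    (hn0 : iteratedDerivWithin n ψ (Set.Icc 0 1) 0 ≠ 0)
    (hzero : ∀ k : ℕ, 1 ≤ k → k ≤ n - 1 → iteratedDerivWithin k ψ (Set.Icc 0 1) 0 = 0)
    (Z : Ω → ℝ) (Y : Ω → Fin d → ℝ) (hZmeas : Measurable Z) (hYmeas : Measurable Y)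
    (hZlaw : Measure.map Z ℙ = paretoMeasure 1 (β - 1))
    (hYlaw : Measure.map Y ℙ = unifCube D d)
    (hZY : IndepFun Z Y ℙ) :
    ∃ C : ℝ, 0 < C ∧
      ∀ s ∈ Set.Icc (0 : Fin d → ℝ) fun _ => D,
        ∀ x ∈ Set.Icc (0 : Fin d → ℝ) fun _ => D,
          ∫ ω, ((Z ω) ^ (α - d) * ψ (vdist D (Y ω) s / Z ω) -
              (Z ω) ^ (α - d) * ψ (vdist D (Y ω) x / Z ω)) ^ 2 ∂ℙ ≤
            C * (∑ i, |s i - x i|) ^ 2 :=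
  stmt14_general D hD d α β hβ n hn hκ ψ hψ1 hsmooth hLip hzero Z Y hZmeas hZlaw
end
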